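/- For all natural numbers 2 ≤ k < m, (O_{k-1}·O_{m-k})/O_m ≤ √(π/2)·k^{3/4}·√(C(m,k)), where C(m,k) is the binomial coefficient. -/

import Mathlib

/-!
Put `a = k/2` and `b = (m - k + 1)/2`. The left-hand side is `2 Γ(a+b) / (Γ(a) Γ(b))`, and
Legendre's duplication formula turns `C(m, k)` into
`√π Γ(a+b) Γ(a+b+1/2) / (a Γ(a) Γ(a+1/2) Γ(b) Γ(b+1/2))`.
After squaring, the claim compares the half-step ratios `Γ(x + 1/2) / Γ(x)`. Log-convexity of
`Γ` between `x` and `x + 1` gives `Γ(x + 1/2)² ≤ x Γ(x)²`; used at `a`, at `b` and at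
`a + b + 1/2` it leaves only the elementary inequality `8 b (a + b + 1/2) ≤ π³ (a + b)²`.
-/

/-- The m-dimensional volume of the unit sphere `S^m ⊆ ℝ^{m+1}`. -/
noncomputable def sphereVol (m : ℕ) : ℝ :=
  2 * Real.pi ^ (((m : ℝ) + 1) / 2) / Real.Gamma (((m : ℝ) + 1) / 2)

open Real

namespace Real

theorem Gamma_midpoint_sq_le {x y : ℝ} (hx : 0 < x) (hy : 0 < y) :
    Gamma ((x + y) / 2) ^ 2 ≤ Gamma x * Gamma y := by
  have h := Gamma_mul_add_mul_le_rpow_Gamma_mul_rpow_Gamma hx hy (a := 1 / 2) (b := 1 / 2)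
    one_half_pos one_half_pos (add_halves 1)
  rw [← sqrt_eq_rpow, ← sqrt_eq_rpow, ← sqrt_mul (Gamma_pos_of_pos hx).le] at h
  refine (le_sqrt (Gamma_pos_of_pos (by positivity)).le
    (mul_pos (Gamma_pos_of_pos hx) (Gamma_pos_of_pos hy)).le).1 ?_
  convert h using 2
  ring

theorem Gamma_add_half_sq_le {x : ℝ} (hx : 0 < x) :
    Gamma (x + 1 / 2) ^ 2 ≤ x * Gamma x ^ 2 := by
  have h := Gamma_midpoint_sq_le hx (by positivity : 0 < x + 1)
  rwa [Gamma_add_one hx.ne', show (x + (x + 1)) / 2 = x + 1 / 2 by ring,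
    show Gamma x * (x * Gamma x) = x * Gamma x ^ 2 by ring] at h

theorem Gamma_two_mul (x : ℝ) :
    Gamma (2 * x) = 4 ^ x * Gamma x * Gamma (x + 1 / 2) / (2 * √π) := by
  have h4 : (2 : ℝ) ^ (1 - 2 * x) * 4 ^ x = 2 := by
    rw [show (4 : ℝ) = 2 ^ (2 : ℝ) by norm_num, ← rpow_mul zero_le_two, ← rpow_add two_pos]
    norm_num
  rw [mul_assoc (4 ^ x), Gamma_mul_Gamma_add_half]
  field_simp
  linear_combination -Gamma (2 * x) * h4

theorem Gamma_add_div_Gamma_mul_Gamma_eq {a b : ℝ} (ha : 0 < a) (hb : 0 < b) :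
    Gamma (2 * a + 2 * b) / (Gamma (2 * a + 1) * Gamma (2 * b)) =
      √π * Gamma (a + b) * Gamma (a + b + 1 / 2) /
        (a * (Gamma a * Gamma (a + 1 / 2)) * (Gamma b * Gamma (b + 1 / 2))) := by
  have hA := Gamma_pos_of_pos ha
  have hB := Gamma_pos_of_pos hb
  have hA' := Gamma_pos_of_pos (by positivity : 0 < a + 1 / 2)
  have hB' := Gamma_pos_of_pos (by positivity : 0 < b + 1 / 2)
  have hπ := sqrt_pos.2 pi_pos
  rw [Gamma_add_one (by positivity), ← mul_add, Gamma_two_mul, Gamma_two_mul, Gamma_two_mul,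
    rpow_add (by norm_num)]
  field_simp

theorem Gamma_add_half_product_sq_le {a b : ℝ} (ha : 0 < a) (hb : 0 < b) (hab : 1 ≤ a + b) :
    (4 * Gamma (a + b) * Gamma (a + 1 / 2) * Gamma (b + 1 / 2)) ^ 2 ≤
      2 * π ^ 3 * a * (Gamma (a + b + 1 / 2) * Gamma a * Gamma b) ^ 2 := by
  set s := a + b
  have hs : 0 < s := by positivity
  have hA := Gamma_add_half_sq_le ha
  have hB := Gamma_add_half_sq_le hb
  have hS : s ^ 2 * Gamma s ^ 2 ≤ (s + 1 / 2) * Gamma (s + 1 / 2) ^ 2 := by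
    have h := Gamma_add_half_sq_le (by positivity : 0 < s + 1 / 2)
    rwa [add_assoc, add_halves, Gamma_add_one hs.ne', mul_pow] at h
  have hπ : (27 : ℝ) ≤ π ^ 3 := by
    have := pi_gt_three.le
    calc (27 : ℝ) = 3 ^ 3 := by norm_num
      _ ≤ π ^ 3 := by gcongr
  have hscalar : 16 * b * (s + 1 / 2) ≤ 2 * π ^ 3 * s ^ 2 := by
    nlinarith
  refine le_of_mul_le_mul_left ?_ (pow_pos hs 2)
  calc s ^ 2 * (4 * Gamma s * Gamma (a + 1 / 2) * Gamma (b + 1 / 2)) ^ 2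
      = 16 * Gamma (a + 1 / 2) ^ 2 * Gamma (b + 1 / 2) ^ 2 * (s ^ 2 * Gamma s ^ 2) := by ring
    _ ≤ 16 * (a * Gamma a ^ 2) * (b * Gamma b ^ 2) * ((s + 1 / 2) * Gamma (s + 1 / 2) ^ 2) := by
      gcongr
    _ = 16 * b * (s + 1 / 2) * (a * (Gamma (s + 1 / 2) * Gamma a * Gamma b) ^ 2) := by ring
    _ ≤ 2 * π ^ 3 * s ^ 2 * (a * (Gamma (s + 1 / 2) * Gamma a * Gamma b) ^ 2) := by gcongr
    _ = s ^ 2 * (2 * π ^ 3 * a * (Gamma (s + 1 / 2) * Gamma a * Gamma b) ^ 2) := by ring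


theorem two_mul_Gamma_add_div_le {a b : ℝ} (ha : 0 < a) (hb : 0 < b) (hab : 1 ≤ a + b) :
    2 * Gamma (a + b) / (Gamma a * Gamma b) ≤
      √(π / 2) * (2 * a) ^ ((3 : ℝ) / 4) *
        √(Gamma (2 * a + 2 * b) / (Gamma (2 * a + 1) * Gamma (2 * b))) := by
  have hA := Gamma_pos_of_pos ha
  have hB := Gamma_pos_of_pos hb
  have hA' := Gamma_pos_of_pos (by positivity : 0 < a + 1 / 2)
  have hB' := Gamma_pos_of_pos (by positivity : 0 < b + 1 / 2)
  have hS := Gamma_pos_of_pos (by positivity : 0 < a + b)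
  have hS' := Gamma_pos_of_pos (by positivity : 0 < a + b + 1 / 2)
  have hcore : 4 * Gamma (a + b) * Gamma (a + 1 / 2) * Gamma (b + 1 / 2) ≤
      π * √π * √(2 * a) * (Gamma (a + b + 1 / 2) * Gamma a * Gamma b) := by
    refine (pow_le_pow_iff_left₀ (by positivity) (by positivity) two_ne_zero).1 ?_
    refine (Gamma_add_half_product_sq_le ha hb hab).trans_eq ?_
    simp only [mul_pow, sq_sqrt pi_pos.le, sq_sqrt (by positivity : (0 : ℝ) ≤ 2 * a)]
    ring
  have h34 : (2 * a) ^ ((3 : ℝ) / 4) = √(2 * a * √(2 * a)) := by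
    rw [sqrt_eq_rpow, sqrt_eq_rpow, ← rpow_one_add' (by positivity) (by norm_num),
      ← rpow_mul (by positivity)]
    norm_num
  rw [h34, ← sqrt_mul (by positivity), ← sqrt_mul (by positivity),
    le_sqrt (by positivity) (by positivity), Gamma_add_div_Gamma_mul_Gamma_eq ha hb]
  calc (2 * Gamma (a + b) / (Gamma a * Gamma b)) ^ 2
      = 4 * Gamma (a + b) * Gamma (a + 1 / 2) * Gamma (b + 1 / 2) *
        (Gamma (a + b) / (Gamma a ^ 2 * Gamma (a + 1 / 2) * Gamma b ^ 2 * Gamma (b + 1 / 2))) := by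
        field_simp
        norm_num
    _ ≤ π * √π * √(2 * a) * (Gamma (a + b + 1 / 2) * Gamma a * Gamma b) *
        (Gamma (a + b) / (Gamma a ^ 2 * Gamma (a + 1 / 2) * Gamma b ^ 2 * Gamma (b + 1 / 2))) := by
        gcongr
    _ = _ := by field_simp

end Real

theorem sphereVol_mul_sphereVol_div (p q : ℕ) :
    sphereVol p * sphereVol q / sphereVol (p + q + 1) =
      2 * Gamma ((p + 1) / 2 + (q + 1) / 2) / (Gamma ((p + 1) / 2) * Gamma ((q + 1) / 2)) := by
  have hp := Gamma_pos_of_pos (by positivity : (0 : ℝ) < (p + 1) / 2)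
  have hq := Gamma_pos_of_pos (by positivity : (0 : ℝ) < (q + 1) / 2)
  have hpq := Gamma_pos_of_pos (by positivity : (0 : ℝ) < (p + 1) / 2 + (q + 1) / 2)
  have hπ := rpow_pos_of_pos pi_pos (((p : ℝ) + 1) / 2 + (q + 1) / 2)
  unfold sphereVol
  rw [show ((p + q + 1 : ℕ) + 1 : ℝ) / 2 = (p + 1) / 2 + (q + 1) / 2 by push_cast; ring,
    rpow_add pi_pos] at *
  field_simp

theorem sphereVol_ratio_bound (m k : ℕ) (hk : 2 ≤ k) (hkm : k < m) :
    sphereVol (k - 1) * sphereVol (m - k) / sphereVol m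
      ≤ Real.sqrt (Real.pi / 2) * (k : ℝ) ^ ((3 : ℝ) / 4) * Real.sqrt (m.choose k) := by
  obtain ⟨p, rfl⟩ : ∃ p, k = p + 1 := ⟨k - 1, by omega⟩
  obtain ⟨q, rfl⟩ : ∃ q, m = p + q + 1 := ⟨m - (p + 1), by omega⟩
  set a : ℝ := (p + 1) / 2 with ha
  set b : ℝ := (q + 1) / 2 with hb
  have hchoose : ((p + q + 1).choose (p + 1) : ℝ) =
      Gamma (2 * a + 2 * b) / (Gamma (2 * a + 1) * Gamma (2 * b)) := by
    rw [show p + q + 1 = p + 1 + q by ring, Nat.cast_add_choose, ← Gamma_nat_eq_factorial,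
      ← Gamma_nat_eq_factorial, ← Gamma_nat_eq_factorial, ha, hb]
    push_cast
    ring_nf
  rw [show p + 1 - 1 = p by omega, show p + q + 1 - (p + 1) = q by omega,
    sphereVol_mul_sphereVol_div, hchoose, show ((p + 1 : ℕ) : ℝ) = 2 * a by push_cast; ring]
  exact two_mul_Gamma_add_div_le (by positivity) (by positivity)
    (by linarith [p.cast_nonneg (α := ℝ), q.cast_nonneg (α := ℝ)])
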